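/- arXiv:0803.2091 — 3 statements merged into one kernel-verified Lean document; each statement's English description precedes it below -/
import Mathlib

section
/- Let α be a strong dual vector of a finite game, let i be a player, and let σ_{-i} be a profile of mixed strategies of the players other than i such that σ_j is α_j-stationary for every j ≠ i. Then for every pure strategy c_i of player i having marginal probability zero in all correlated equilibria, U_i(σ_{-i}, c_i) < U_i(σ_{-i}, α_i*c_i). -/
open scoped BigOperators

section Prelim

variable {S : Type} [Fintype S] [DecidableEq S]

/-- `σ` is a mixed strategy (probability distribution) on the finite set `S`. -/
def IsMixed (σ : S → ℝ) : Prop := (∀ s, 0 ≤ σ s) ∧ ∑ s, σ s = 1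

/-- The Dirac measure `δ_s`. -/
def dirac (s : S) : S → ℝ := fun d => if d = s then 1 else 0

/-- `α_i * σ_i`, the image of the mixed strategy `σ` under the deviation plan `αᵢ`,
where `αᵢ c d` is the probability `αᵢ(d | c)`. -/
def devImage (αᵢ : S → S → ℝ) (σ : S → ℝ) : S → ℝ := fun d => ∑ c, σ c * αᵢ c d

/-- `σ` is `αᵢ`-stationary: `αᵢ * σ = σ`. -/
def IsStationaryStrat (αᵢ : S → S → ℝ) (σ : S → ℝ) : Prop := devImage αᵢ σ = σ

/-- A nonempty `B ⊆ S` is `αᵢ`-absorbing if `supp (αᵢ * c) ⊆ B` for all `c ∈ B`. -/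
def IsAbsorbing (αᵢ : S → S → ℝ) (B : Finset S) : Prop :=
  B.Nonempty ∧ ∀ c ∈ B, ∀ d, 0 < αᵢ c d → d ∈ B

/-- A minimal absorbing set: an absorbing set containing no proper nonempty absorbing subset. -/
def IsMinimalAbsorbing (αᵢ : S → S → ℝ) (B : Finset S) : Prop :=
  IsAbsorbing αᵢ B ∧ ∀ B' ⊆ B, IsAbsorbing αᵢ B' → B' = B

/-- `C_i/α_i`: the set of `αᵢ`-stationary mixed strategies whose support is contained
in some minimal `αᵢ`-absorbing set. -/
def ReducedSet (αᵢ : S → S → ℝ) : Set (S → ℝ) :=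
  {σ | IsMixed σ ∧ IsStationaryStrat αᵢ σ ∧
    ∃ B : Finset S, IsMinimalAbsorbing αᵢ B ∧ ∀ s, σ s ≠ 0 → s ∈ B}

end Prelim

section Games

variable {N : Type} [Fintype N] [DecidableEq N]
  {C : N → Type} [∀ i, Fintype (C i)] [∀ i, DecidableEq (C i)]

/-- Marginal probability of the pure strategy `cᵢ` of player `i` under `μ`. -/
def marginal (μ : (∀ j, C j) → ℝ) (i : N) (cᵢ : C i) : ℝ :=
  ∑ c : ∀ j, C j, if c i = cᵢ then μ c else 0

/-- The incentive sum `∑_{c_{-i}} μ(c_{-i},cᵢ)[U_i(c_{-i},dᵢ) − U_i(c_{-i},cᵢ)]`. -/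
def incentiveSum (U : ∀ i : N, (∀ j, C j) → ℝ) (μ : (∀ j, C j) → ℝ) (i : N) (cᵢ dᵢ : C i) : ℝ :=
  ∑ c : ∀ j, C j, if c i = cᵢ then μ c * (U i (Function.update c i dᵢ) - U i c) else 0

/-- Correlated equilibrium. -/
def IsCorrelatedEq (U : ∀ i : N, (∀ j, C j) → ℝ) (μ : (∀ j, C j) → ℝ) : Prop :=
  (∀ c, 0 ≤ μ c) ∧ (∑ c : ∀ j, C j, μ c) = 1 ∧
    ∀ (i : N) (cᵢ dᵢ : C i), incentiveSum U μ i cᵢ dᵢ ≤ 0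

/-- Multilinear extension: payoff of player `i` under the mixed strategy profile `σ`. -/
def mixedPayoff (U : ∀ i : N, (∀ j, C j) → ℝ) (σ : ∀ j, C j → ℝ) (i : N) : ℝ :=
  ∑ c : ∀ j, C j, (∏ j, σ j (c j)) * U i c

/-- Nash equilibrium. -/
def IsNash (U : ∀ i : N, (∀ j, C j) → ℝ) (σ : ∀ j, C j → ℝ) : Prop :=
  (∀ i, IsMixed (σ i)) ∧
  ∀ (i : N) (dᵢ : C i),
    mixedPayoff U (Function.update σ i (dirac dᵢ)) i ≤ mixedPayoff U σ i

/-- `D(c, α) = ∑_i [U_i(c_{-i}, α_i * c_i) − U_i(c)]`. -/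
def devGain (U : ∀ i : N, (∀ j, C j) → ℝ) (α : ∀ i, C i → C i → ℝ) (c : ∀ j, C j) : ℝ :=
  ∑ i, ((∑ dᵢ, α i (c i) dᵢ * U i (Function.update c i dᵢ)) - U i c)

/-- A dual vector: a profile of deviation plans with `D(c,α) ≥ 0` for all `c`. -/
def IsDualVector (U : ∀ i : N, (∀ j, C j) → ℝ) (α : ∀ i, C i → C i → ℝ) : Prop :=
  (∀ (i : N) (cᵢ : C i), IsMixed (α i cᵢ)) ∧ ∀ c, 0 ≤ devGain U α c

/-- A strong dual vector: `D(c,α) > 0` whenever `c` has probability zero in all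
correlated equilibria. -/
def IsStrong (U : ∀ i : N, (∀ j, C j) → ℝ) (α : ∀ i, C i → C i → ℝ) : Prop :=
  ∀ c : ∀ j, C j, (∀ μ, IsCorrelatedEq U μ → μ c = 0) → 0 < devGain U α c

/-- A full dual vector: `α_i(dᵢ|cᵢ) > 0` whenever `β_i(dᵢ|cᵢ) > 0` for some dual vector `β`. -/
def IsFull (U : ∀ i : N, (∀ j, C j) → ℝ) (α : ∀ i, C i → C i → ℝ) : Prop :=
  ∀ (i : N) (cᵢ dᵢ : C i),
    (∃ β : ∀ i, C i → C i → ℝ, IsDualVector U β ∧ 0 < β i cᵢ dᵢ) → 0 < α i cᵢ dᵢ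

end Games

/-!
Weight each pure profile `c` by the product distribution `τ` obtained from `σ` by letting
player `i` play `cᵢ` for sure. By multilinearity, the `τ`-average of `D(c, α)` is
`∑ⱼ [Uⱼ(τ₋ⱼ, αⱼ * τⱼ) − Uⱼ(τ)]`; stationarity kills every term with `j ≠ i`, and
`αᵢ * δ_{cᵢ} = αᵢ cᵢ`, so the average is exactly `Uᵢ(σ₋ᵢ, αᵢ * cᵢ) − Uᵢ(σ₋ᵢ, cᵢ)`.
Every profile in the support of `τ` has `i`-th coordinate `cᵢ`, hence probability zero in
all correlated equilibria, hence `D(c, α) > 0` since `α` is strong; as `D ≥ 0` everywhere,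
the average is positive.
-/

open Finset Function

lemma sum_mul_pos_of_pos_of_ne_zero {ι : Type*} [Fintype ι] {w f : ι → ℝ}
    (hw : ∀ x, 0 ≤ w x) (hw_sum : ∑ x, w x ≠ 0) (hf : ∀ x, 0 ≤ f x)
    (hf_pos : ∀ x, w x ≠ 0 → 0 < f x) : 0 < ∑ x, w x * f x := by
  obtain ⟨x, -, hx⟩ := exists_ne_zero_of_sum_ne_zero hw_sum
  exact sum_pos' (fun y _ => mul_nonneg (hw y) (hf y))
    ⟨x, mem_univ x, mul_pos ((hw x).lt_of_ne' hx) (hf_pos x hx)⟩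

lemma eq_of_dirac_ne_zero {S : Type} [DecidableEq S] {s d : S} (h : dirac s d ≠ 0) : d = s := by
  by_contra hne
  exact h (if_neg hne)

section Strategies

variable {S : Type} [Fintype S] [DecidableEq S]

lemma isMixed_dirac (s : S) : IsMixed (dirac s) :=
  ⟨fun d => by unfold dirac; split_ifs <;> norm_num, by simp [dirac]⟩

lemma devImage_dirac (αᵢ : S → S → ℝ) (s : S) : devImage αᵢ (dirac s) = αᵢ s := by
  funext d
  simp [devImage, dirac]

end Strategies

section Profiles

variable {N : Type} [Fintype N] [DecidableEq N] {C : N → Type}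

lemma prod_update_apply (τ : ∀ j, C j → ℝ) (c : ∀ j, C j) (j : N) (ρ : C j → ℝ) :
    ∏ k, update τ j ρ k (c k) = ρ (c j) * ∏ k ∈ {j}ᶜ, τ k (c k) := by
  simp_rw [apply_update (fun k (f : C k → ℝ) => f (c k)) τ j ρ]
  rw [prod_update_of_mem (mem_univ j), compl_eq_univ_sdiff]

lemma prod_compl_apply_update (τ : ∀ j, C j → ℝ) (c : ∀ j, C j) (j : N) (d : C j) :
    ∏ k ∈ {j}ᶜ, τ k (update c j d k) = ∏ k ∈ {j}ᶜ, τ k (c k) :=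
  prod_congr rfl fun k hk => by rw [update_of_ne (by simpa using hk)]

variable [∀ i, Fintype (C i)]

lemma sum_prod_eq_one {σ : ∀ j, C j → ℝ} (hσ : ∀ j, IsMixed (σ j)) :
    ∑ c : ∀ j, C j, ∏ j, σ j (c j) = 1 := by
  rw [← Fintype.prod_sum]
  exact prod_eq_one fun j _ => (hσ j).2

/-- Deviating from the pure profile drawn from `τ` is the same as deviating from `τⱼ` itself. -/
lemma mixedPayoff_update_devImage (U : ∀ i : N, (∀ j, C j) → ℝ) (α : ∀ i, C i → C i → ℝ)
    (τ : ∀ j, C j → ℝ) (j : N) :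
    mixedPayoff U (update τ j (devImage (α j) (τ j))) j =
      ∑ c : ∀ k, C k, (∏ k, τ k (c k)) * ∑ d, α j (c j) d * U j (update c j d) := by
  -- `(c, d) ↦ (update c j d, c j)` is an involution of `C × Cⱼ` exchanging `cⱼ` and `d`.
  have hinv : Involutive fun p : (∀ k, C k) × C j => (update p.1 j p.2, p.1 j) := by
    rintro ⟨c, d⟩
    simp
  let G : (∀ k, C k) × C j → ℝ := fun p =>
    (∏ k ∈ {j}ᶜ, τ k (p.1 k)) * (τ j p.2 * α j p.2 (p.1 j) * U j p.1)
  calc mixedPayoff U (update τ j (devImage (α j) (τ j))) j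
      = ∑ p, G p := by
        rw [Fintype.sum_prod_type]
        refine sum_congr rfl fun c _ => ?_
        simp only [G, prod_update_apply, devImage, sum_mul]
        exact sum_congr rfl fun _ _ => by ring
    _ = ∑ p, G (hinv.toPerm _ p) := (Equiv.sum_comp hinv.toPerm G).symm
    _ = _ := by
        rw [Fintype.sum_prod_type]
        refine sum_congr rfl fun c _ => ?_
        simp only [G, Involutive.coe_toPerm, update_self, prod_compl_apply_update,
          Fintype.prod_eq_mul_prod_compl j fun k => τ k (c k)]
        rw [mul_sum]
        exact sum_congr rfl fun _ _ => by ring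

lemma sum_prod_mul_devGain (U : ∀ i : N, (∀ j, C j) → ℝ) (α : ∀ i, C i → C i → ℝ)
    (τ : ∀ j, C j → ℝ) :
    ∑ c : ∀ k, C k, (∏ k, τ k (c k)) * devGain U α c =
      ∑ j, (mixedPayoff U (update τ j (devImage (α j) (τ j))) j - mixedPayoff U τ j) := by
  simp only [devGain, mul_sum]
  rw [sum_comm]
  refine sum_congr rfl fun j _ => ?_
  simp only [mul_sub, sum_sub_distrib, mixedPayoff_update_devImage]
  rfl

end Profiles

section CorrelatedEquilibria

variable {N : Type} [Fintype N] [DecidableEq N]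
  {C : N → Type} [∀ i, Fintype (C i)] [∀ i, DecidableEq (C i)]

lemma apply_eq_zero_of_marginal_eq_zero {μ : (∀ j, C j) → ℝ} (hμ : ∀ c, 0 ≤ μ c)
    {i : N} {c : ∀ j, C j} (h : marginal μ i (c i) = 0) : μ c = 0 := by
  have hnn : ∀ c' ∈ univ, 0 ≤ if c' i = c i then μ c' else 0 := fun c' _ => by
    split_ifs
    exacts [hμ c', le_rfl]
  simpa using (sum_eq_zero_iff_of_nonneg hnn).mp h c (mem_univ c)

lemma IsStrong.devGain_pos {U : ∀ i : N, (∀ j, C j) → ℝ} {α : ∀ i, C i → C i → ℝ}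
    (hstrong : IsStrong U α) {i : N} {c : ∀ j, C j}
    (hzero : ∀ μ, IsCorrelatedEq U μ → marginal μ i (c i) = 0) : 0 < devGain U α c :=
  hstrong c fun μ hμ => apply_eq_zero_of_marginal_eq_zero hμ.1 (hzero μ hμ)

end CorrelatedEquilibria

theorem strong_dual_vector_strict_gain_general
    {N : Type} [Fintype N] [DecidableEq N]
    {C : N → Type} [∀ i, Fintype (C i)] [∀ i, DecidableEq (C i)]
    (U : ∀ i : N, (∀ j, C j) → ℝ) (α : ∀ i, C i → C i → ℝ)
    (hα : IsDualVector U α) (hstrong : IsStrong U α)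
    (i : N) (σ : ∀ j, C j → ℝ) (hmix : ∀ j, IsMixed (σ j))
    (hstat : ∀ j, j ≠ i → IsStationaryStrat (α j) (σ j))
    (cᵢ : C i) (hzero : ∀ μ, IsCorrelatedEq U μ → marginal μ i cᵢ = 0) :
    mixedPayoff U (Function.update σ i (dirac cᵢ)) i <
      mixedPayoff U (Function.update σ i (α i cᵢ)) i := by
  set τ := update σ i (dirac cᵢ) with hτ
  have hτ_mixed : ∀ j, IsMixed (τ j) := fun j => by
    rcases eq_or_ne j i with rfl | hj
    · simpa [τ] using isMixed_dirac cᵢ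
    · simpa [τ, update_of_ne hj] using hmix j
  have hgain : ∑ c : ∀ k, C k, (∏ k, τ k (c k)) * devGain U α c =
      mixedPayoff U (update σ i (α i cᵢ)) i - mixedPayoff U τ i := by
    rw [sum_prod_mul_devGain, Fintype.sum_eq_single i]
    · simp [τ, devImage_dirac]
    · intro j hj
      rw [hτ, update_of_ne hj, hstat j hj, ← update_of_ne hj (dirac cᵢ) σ, update_eq_self,
        sub_self]
  have hpos : 0 < ∑ c : ∀ k, C k, (∏ k, τ k (c k)) * devGain U α c := by
    refine sum_mul_pos_of_pos_of_ne_zero (fun c => prod_nonneg fun k _ => (hτ_mixed k).1 _)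
      (by simp [sum_prod_eq_one hτ_mixed]) hα.2 fun c hc => hstrong.devGain_pos (i := i) ?_
    have hci : c i = cᵢ := eq_of_dirac_ne_zero (by simpa [τ] using prod_ne_zero_iff.mp hc i)
    rwa [hci]
  linarith

/-- If `α` is a strong dual vector and `σ j` is `α j`-stationary for every `j ≠ i`, then for
every pure strategy `cᵢ` of player `i` with marginal probability zero in all correlated
equilibria, `U_i(σ_{-i}, cᵢ) < U_i(σ_{-i}, α_i * cᵢ)`. -/
theorem strong_dual_vector_strict_gain
    {N : Type} [Fintype N] [DecidableEq N] [Nonempty N]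
    {C : N → Type} [∀ i, Fintype (C i)] [∀ i, DecidableEq (C i)] [∀ i, Nonempty (C i)]
    (U : ∀ i : N, (∀ j, C j) → ℝ) (α : ∀ i, C i → C i → ℝ)
    (hα : IsDualVector U α) (hstrong : IsStrong U α)
    (i : N) (σ : ∀ j, C j → ℝ) (hmix : ∀ j, IsMixed (σ j))
    (hstat : ∀ j, j ≠ i → IsStationaryStrat (α j) (σ j))
    (cᵢ : C i) (hzero : ∀ μ, IsCorrelatedEq U μ → marginal μ i cᵢ = 0) :
    mixedPayoff U (Function.update σ i (dirac cᵢ)) i <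
      mixedPayoff U (Function.update σ i (α i cᵢ)) i :=
  strong_dual_vector_strict_gain_general U α hα hstrong i σ hmix hstat cᵢ hzero
end

section
/- Let Γ' be a rescaling of the finite game Γ. If α is a dual vector of Γ, then there exists a dual vector α' of Γ' such that C_i/α'_i = C_i/α_i for every player i; in particular, the α-reduced game Γ'/α (with strategy sets C_i/α_i and the payoffs of Γ') is a dual reduction of Γ'. -/
/-!
Let `aᵢ > 0` be the scale of player `i` and `λ > 0` a lower bound of all `aᵢ`. The lazy plan
`α'ᵢ = (1 - λ/aᵢ)·id + (λ/aᵢ)·αᵢ` gives `D'(c, α') = λ·D(c, α)`: the terms `fᵢ(c₋ᵢ)` cancel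
because `αᵢ cᵢ` is a probability, and player `i`'s gain is scaled by `(λ/aᵢ)·aᵢ = λ`.
Mixing a plan with the identity changes neither its stationary strategies nor its absorbing
sets, so `C_i/α'_i = C_i/α_i`.
-/

open scoped BigOperators

/-- `Γ'` (payoffs `U'`) is a rescaling of `Γ` (payoffs `U`): for every player `i`,
`U'_i(c) = a_i·U_i(c) + f_i(c_{-i})` with `a_i > 0`. -/
def IsRescaling {N : Type} [Fintype N] [DecidableEq N]
    {C : N → Type} [∀ i, Fintype (C i)] [∀ i, DecidableEq (C i)]
    (U U' : ∀ i : N, (∀ j, C j) → ℝ) : Prop :=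
  ∀ i : N, ∃ a : ℝ, 0 < a ∧ ∃ f : (∀ j, C j) → ℝ,
    (∀ (c : ∀ j, C j) (dᵢ : C i), f (Function.update c i dᵢ) = f c) ∧
    ∀ c, U' i c = a * U i c + f c

open Finset

lemma exists_pos_forall_le {ι : Type*} [Finite ι] {a : ι → ℝ} (ha : ∀ i, 0 < a i) :
    ∃ lam > 0, ∀ i, lam ≤ a i := by
  obtain ⟨lam, hle, hpos⟩ := ((Filter.eventually_all.2 fun i =>
    (eventually_le_nhds (ha i)).filter_mono nhdsWithin_le_nhds).and
      (self_mem_nhdsWithin (s := Set.Ioi (0 : ℝ)))).exists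
  exact ⟨lam, hpos, hle⟩

section LazyPlan

variable {S : Type} [DecidableEq S]

def lazyPlan (t : ℝ) (αᵢ : S → S → ℝ) : S → S → ℝ :=
  fun c d => (1 - t) * dirac c d + t * αᵢ c d

variable {t : ℝ} {αᵢ : S → S → ℝ}

lemma isAbsorbing_lazyPlan_iff (ht : 0 < t) {B : Finset S} :
    IsAbsorbing (lazyPlan t αᵢ) B ↔ IsAbsorbing αᵢ B := by
  refine and_congr_right fun _ => forall₂_congr fun c hc => forall_congr' fun d => ?_
  by_cases hdc : d = c
  · subst hdc; simp [hc]
  · simp only [lazyPlan, dirac, if_neg hdc, mul_zero, zero_add, mul_pos_iff_of_pos_left ht]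

lemma isMinimalAbsorbing_lazyPlan_iff (ht : 0 < t) {B : Finset S} :
    IsMinimalAbsorbing (lazyPlan t αᵢ) B ↔ IsMinimalAbsorbing αᵢ B := by
  simp only [IsMinimalAbsorbing, isAbsorbing_lazyPlan_iff ht]

variable [Fintype S]

lemma sum_lazyPlan_mul (c : S) (g : S → ℝ) :
    ∑ d, lazyPlan t αᵢ c d * g d = (1 - t) * g c + t * ∑ d, αᵢ c d * g d := by
  simp only [lazyPlan, dirac, add_mul, sum_add_distrib, mul_assoc, ← mul_sum, ite_mul, one_mul,
    zero_mul, sum_ite_eq', mem_univ, if_true]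

lemma isMixed_lazyPlan (ht₀ : 0 ≤ t) (ht₁ : t ≤ 1) {c : S} (h : IsMixed (αᵢ c)) :
    IsMixed (lazyPlan t αᵢ c) := by
  refine ⟨fun d => ?_, ?_⟩
  · have : 0 ≤ dirac c d := by unfold dirac; split_ifs <;> norm_num
    exact add_nonneg (mul_nonneg (sub_nonneg.2 ht₁) this) (mul_nonneg ht₀ (h.1 d))
  · simpa [h.2] using sum_lazyPlan_mul (t := t) (αᵢ := αᵢ) c 1

lemma devImage_lazyPlan (σ : S → ℝ) :
    devImage (lazyPlan t αᵢ) σ = (1 - t) • σ + t • devImage αᵢ σ := by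
  ext d
  simp only [devImage, lazyPlan, dirac, Pi.add_apply, Pi.smul_apply, smul_eq_mul, mul_add,
    sum_add_distrib, mul_sum, mul_ite, mul_one, mul_zero, sum_ite_eq, mem_univ, if_true]
  ring_nf

lemma isStationaryStrat_lazyPlan_iff (ht : t ≠ 0) {σ : S → ℝ} :
    IsStationaryStrat (lazyPlan t αᵢ) σ ↔ IsStationaryStrat αᵢ σ := by
  unfold IsStationaryStrat
  rw [devImage_lazyPlan, ← sub_eq_zero,
    show (1 - t) • σ + t • devImage αᵢ σ - σ = t • (devImage αᵢ σ - σ) by module,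
    smul_eq_zero, sub_eq_zero, or_iff_right ht]

lemma reducedSet_lazyPlan (ht : 0 < t) : ReducedSet (lazyPlan t αᵢ) = ReducedSet αᵢ := by
  ext σ
  simp only [ReducedSet, Set.mem_ofPred_eq, isStationaryStrat_lazyPlan_iff ht.ne',
    isMinimalAbsorbing_lazyPlan_iff ht]

end LazyPlan

lemma devGain_lazyPlan_of_rescaling {N : Type} [Fintype N] [DecidableEq N]
    {C : N → Type} [∀ i, Fintype (C i)] [∀ i, DecidableEq (C i)]
    {U U' : ∀ i : N, (∀ j, C j) → ℝ} {a : N → ℝ} {f : N → (∀ j, C j) → ℝ}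
    (hf : ∀ i c dᵢ, f i (Function.update c i dᵢ) = f i c)
    (hU : ∀ i c, U' i c = a i * U i c + f i c) (ha : ∀ i, a i ≠ 0)
    {α : ∀ i, C i → C i → ℝ} (hα : ∀ i cᵢ, ∑ d, α i cᵢ d = 1) (lam : ℝ) (c : ∀ j, C j) :
    devGain U' (fun i => lazyPlan (lam / a i) (α i)) c = lam * devGain U α c := by
  simp only [devGain, mul_sum]
  refine sum_congr rfl fun i _ => ?_
  rw [sum_lazyPlan_mul, Function.update_eq_self]
  simp only [hU, hf, mul_add, sum_add_distrib, ← sum_mul, hα, mul_left_comm _ (a i), ← mul_sum]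
  field_simp [ha i]
  ring

theorem rescaling_dual_reduction_general
    {N : Type} [Fintype N] [DecidableEq N]
    {C : N → Type} [∀ i, Fintype (C i)] [∀ i, DecidableEq (C i)]
    (U U' : ∀ i : N, (∀ j, C j) → ℝ) (hres : IsRescaling U U')
    (α : ∀ i, C i → C i → ℝ) (hα : IsDualVector U α) :
    ∃ α' : ∀ i, C i → C i → ℝ, IsDualVector U' α' ∧
      ∀ i : N, ReducedSet (α' i) = ReducedSet (α i) := by
  choose a ha f hf hU using hres
  obtain ⟨lam, hlam, hle⟩ := exists_pos_forall_le ha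
  have ht₀ : ∀ i, 0 < lam / a i := fun i => div_pos hlam (ha i)
  have ht₁ : ∀ i, lam / a i ≤ 1 := fun i => (div_le_one (ha i)).2 (hle i)
  refine ⟨fun i => lazyPlan (lam / a i) (α i),
    ⟨fun i cᵢ => isMixed_lazyPlan (ht₀ i).le (ht₁ i) (hα.1 i cᵢ), fun c => ?_⟩,
    fun i => reducedSet_lazyPlan (ht₀ i)⟩
  rw [devGain_lazyPlan_of_rescaling hf hU (fun i => (ha i).ne') (fun i cᵢ => (hα.1 i cᵢ).2)]
  exact mul_nonneg hlam.le (hα.2 c)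

/-- If `Γ'` is a rescaling of `Γ` and `α` is a dual vector of `Γ`, then there is a dual
vector `α'` of `Γ'` inducing the same reduced strategy sets: `C_i/α'_i = C_i/α_i`. -/
theorem rescaling_dual_reduction
    {N : Type} [Fintype N] [DecidableEq N] [Nonempty N]
    {C : N → Type} [∀ i, Fintype (C i)] [∀ i, DecidableEq (C i)] [∀ i, Nonempty (C i)]
    (U U' : ∀ i : N, (∀ j, C j) → ℝ) (hres : IsRescaling U U')
    (α : ∀ i, C i → C i → ℝ) (hα : IsDualVector U α) :
    ∃ α' : ∀ i, C i → C i → ℝ, IsDualVector U' α' ∧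
      ∀ i : N, ReducedSet (α' i) = ReducedSet (α i) :=
  rescaling_dual_reduction_general U U' hres α hα
end

section
/- Let Γ be a finite game and let P be a set of permutations of the player set N such that C_i = C_{p(i)} for every i ∈ N and p ∈ P, and such that Γ is p-symmetric for every p ∈ P. Then there exists a dual vector α of Γ which is both strong and full and satisfies: for every p ∈ P and every player i, C_{p(i)}/α_{p(i)} = C_i/α_i, and the reduced game Γ/α (with strategy sets C_i/α_i) is p-symmetric for every p ∈ P. -/
/-!
The dual vectors of a game form a convex set on which the symmetries of the game act by
relabelling the players. Averaging one strong and full dual vector over the finite group of all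
symmetries gives a dual vector fixed by every symmetry, so `α_{p(i)} = α_i`, which transports the
reduced strategy sets; it remains strong and full because the identity contributes the original
vector and every other term is itself a dual vector. The payoff symmetry of the reduced game is
inherited from the game.

A strong and full dual vector is itself an average: for each profile charged by no correlated
equilibrium, Farkas' lemma applied to the correlated equilibrium inequalities gives deviation rates
that gain weakly everywhere and strictly at that profile, and for each pair of strategies we take
any dual vector moving between them, if there is one. Farkas' lemma rests on finitely generated
cones being closed, which follows from Carathéodory's theorem for cones.
-/

open scoped BigOperators

section Perm

variable {N : Type} (C : N → Type)

/-- From `C (p i) = C i` for all `i`, derive `C (p⁻¹ j) = C j`. -/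
def permTypeEq (p : Equiv.Perm N) (hp : ∀ i, C (p i) = C i) (j : N) :
    C (p.symm j) = C j :=
  (hp (p.symm j)).symm.trans (congrArg C (p.apply_symm_apply j))

/-- The permuted pure strategy profile `c^p`, characterized by `c^p (p i) = c i`. -/
def permProfile (p : Equiv.Perm N) (hp : ∀ i, C (p i) = C i) (c : ∀ j, C j) :
    ∀ j, C j :=
  fun j => cast (permTypeEq C p hp j) (c (p.symm j))

/-- The permuted mixed strategy profile `σ^p`, characterized by `σ^p (p i) = σ i`. -/
def permMixed (p : Equiv.Perm N) (hp : ∀ i, C (p i) = C i) (σ : ∀ j, C j → ℝ) :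
    ∀ j, C j → ℝ :=
  fun j d => σ (p.symm j) (cast (permTypeEq C p hp j).symm d)

end Perm

section FiniteCone

variable {ι E : Type*} [AddCommGroup E] [Module ℝ E]

def finiteCone (v : ι → E) (s : Finset ι) : Set E :=
  {x | ∃ y : ι → ℝ, (∀ t, 0 ≤ y t) ∧ x = ∑ t ∈ s, y t • v t}

lemma finiteCone_mono (v : ι → E) {s s' : Finset ι} (h : s ⊆ s') :
    finiteCone v s ⊆ finiteCone v s' := by
  classical
  rintro x ⟨y, hy, rfl⟩
  refine ⟨fun t => if t ∈ s then y t else 0, fun t => by dsimp only; split_ifs <;> simp [hy], ?_⟩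
  rw [← Finset.sum_subset h fun t _ ht => by simp [ht]]
  exact Finset.sum_congr rfl fun t ht => by simp [ht]

/-- Subtract the largest multiple of the relation `∑ c t • v t = 0` that keeps every coefficient
nonnegative; one coefficient then vanishes. -/
lemma mem_finiteCone_erase_of_sum_smul_eq_zero [DecidableEq ι] (v : ι → E) {s : Finset ι}
    {y c : ι → ℝ} (hy : ∀ t, 0 ≤ y t) (hc : ∑ t ∈ s, c t • v t = 0) (hpos : ∃ t ∈ s, 0 < c t) :
    ∃ t₀ ∈ s, ∑ t ∈ s, y t • v t ∈ finiteCone v (s.erase t₀) := by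
  obtain ⟨t₀, ht₀, hmin⟩ := (s.filter (0 < c ·)).exists_min_image (fun t => y t / c t)
    (by simpa [Finset.filter_nonempty_iff] using hpos)
  rw [Finset.mem_filter] at ht₀
  set τ := y t₀ / c t₀
  have hτ : 0 ≤ τ := div_nonneg (hy t₀) ht₀.2.le
  have hnonneg : ∀ t ∈ s, 0 ≤ y t - τ * c t := by
    intro t ht
    rcases lt_or_ge 0 (c t) with hct | hct
    · have := hmin t (Finset.mem_filter.mpr ⟨ht, hct⟩)
      rw [le_div_iff₀ hct] at this
      linarith
    · nlinarith [hy t]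
  have hzero : y t₀ - τ * c t₀ = 0 := by
    rw [div_mul_cancel₀ _ ht₀.2.ne', sub_self]
  refine ⟨t₀, ht₀.1, fun t => max (y t - τ * c t) 0, fun t => le_max_right _ _, ?_⟩
  calc ∑ t ∈ s, y t • v t = ∑ t ∈ s, (y t - τ * c t) • v t := by
        simp only [sub_smul, Finset.sum_sub_distrib, mul_smul, ← Finset.smul_sum, hc,
          smul_zero, sub_zero]
    _ = ∑ t ∈ s.erase t₀, (y t - τ * c t) • v t :=
        (Finset.sum_erase s (by rw [hzero, zero_smul])).symm
    _ = _ := Finset.sum_congr rfl fun t ht => by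
        dsimp only; rw [max_eq_left (hnonneg t (Finset.mem_of_mem_erase ht))]

lemma exists_mem_finiteCone_erase [DecidableEq ι] (v : ι → E) {s : Finset ι}
    (hdep : ¬ LinearIndependent ℝ (fun t : s => v t)) {x : E} (hx : x ∈ finiteCone v s) :
    ∃ t₀ ∈ s, x ∈ finiteCone v (s.erase t₀) := by
  obtain ⟨y, hy, rfl⟩ := hx
  obtain ⟨g, hg, i, hi⟩ := Fintype.not_linearIndependent_iff.mp hdep
  set c : ι → ℝ := fun t => if h : t ∈ s then g ⟨t, h⟩ else 0
  have hc : ∑ t ∈ s, c t • v t = 0 := by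
    rw [← hg, ← Finset.sum_attach s]
    exact Finset.sum_congr rfl fun t _ => by simp [c, t.2]
  have hci : c i = g i := by simp [c, i.2]
  rcases hi.lt_or_gt with hneg | hpos
  · refine mem_finiteCone_erase_of_sum_smul_eq_zero v hy (c := -c) ?_ ⟨i, i.2, ?_⟩
    · simp [neg_smul, hc]
    · simp [hci, hneg]
  · exact mem_finiteCone_erase_of_sum_smul_eq_zero v hy hc ⟨i, i.2, hci ▸ hpos⟩

lemma exists_linearIndependent_of_mem_finiteCone (v : ι → E) (s : Finset ι) {x : E}
    (hx : x ∈ finiteCone v s) :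
    ∃ s' ⊆ s, LinearIndependent ℝ (fun t : s' => v t) ∧ x ∈ finiteCone v s' := by
  classical
  induction s using Finset.strongInduction with
  | H s ih =>
    by_cases hli : LinearIndependent ℝ (fun t : s => v t)
    · exact ⟨s, subset_rfl, hli, hx⟩
    · obtain ⟨t₀, ht₀, hx'⟩ := exists_mem_finiteCone_erase v hli hx
      obtain ⟨s', hs', hli', hx''⟩ := ih _ (Finset.erase_ssubset ht₀) hx'
      exact ⟨s', hs'.trans (Finset.erase_subset _ _), hli', hx''⟩

variable [TopologicalSpace E] [IsTopologicalAddGroup E] [ContinuousSMul ℝ E] [T2Space E]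

lemma isClosed_finiteCone_of_linearIndependent (v : ι → E) (s : Finset ι)
    (hli : LinearIndependent ℝ (fun t : s => v t)) : IsClosed (finiteCone v s) := by
  classical
  set L := Fintype.linearCombination ℝ (fun t : s => v t)
  have hL : LinearMap.ker L = ⊥ := LinearMap.ker_eq_bot.mpr
    (linearIndependent_iff_injective_fintypeLinearCombination.mp hli)
  have himage : finiteCone v s = L '' {y | ∀ t, 0 ≤ y t} := by
    ext x
    constructor
    · rintro ⟨y, hy, rfl⟩
      exact ⟨fun t => y t, fun t => hy t, by
        simp [L, Fintype.linearCombination_apply, Finset.sum_attach s (fun t => y t • v t)]⟩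
    · rintro ⟨w, hw, rfl⟩
      refine ⟨fun t => if h : t ∈ s then w ⟨t, h⟩ else 0,
        fun t => by dsimp only; split_ifs; exacts [hw _, le_rfl], ?_⟩
      rw [Fintype.linearCombination_apply, ← Finset.sum_coe_sort s]
      exact Finset.sum_congr rfl fun t _ => by simp
  rw [himage, Set.ofPred_forall]
  exact (LinearMap.isClosedEmbedding_of_injective hL).isClosedMap _
    (isClosed_iInter fun t => isClosed_le continuous_const (continuous_apply t))

lemma isClosed_finiteCone [Fintype ι] (v : ι → E) : IsClosed (finiteCone v Finset.univ) := by
  have : finiteCone v Finset.univ =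
      ⋃ s : {s : Finset ι // LinearIndependent ℝ (fun t : s => v t)}, finiteCone v s := by
    ext x
    simp only [Set.mem_iUnion]
    refine ⟨fun hx => ?_, fun ⟨s, hx⟩ => finiteCone_mono v (Finset.subset_univ _) hx⟩
    obtain ⟨s, -, hli, hx⟩ := exists_linearIndependent_of_mem_finiteCone v _ hx
    exact ⟨⟨s, hli⟩, hx⟩
  rw [this]
  exact isClosed_iUnion_of_finite fun s => isClosed_finiteCone_of_linearIndependent v s s.2

def finiteProperCone [Fintype ι] (v : ι → E) : ProperCone ℝ E where
  carrier := finiteCone v Finset.univ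
  add_mem' := by
    rintro _ _ ⟨y, hy, rfl⟩ ⟨z, hz, rfl⟩
    exact ⟨y + z, fun t => add_nonneg (hy t) (hz t), by simp [add_smul, Finset.sum_add_distrib]⟩
  zero_mem' := ⟨0, fun _ => le_rfl, by simp⟩
  smul_mem' := by
    rintro r _ ⟨y, hy, rfl⟩
    exact ⟨fun t => r * y t, fun t => mul_nonneg r.2 (hy t), by simp [Finset.smul_sum, mul_smul]⟩
  isClosed' := isClosed_finiteCone v

end FiniteCone

section Farkas

open scoped RealInnerProductSpace

variable {ι : Type*} [Fintype ι]

theorem farkas {E : Type*} [NormedAddCommGroup E] [InnerProductSpace ℝ E] [CompleteSpace E]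
    (v : ι → E) (b : E) :
    (∃ y : ι → ℝ, (∀ t, 0 ≤ y t) ∧ b = ∑ t, y t • v t) ∨
      ∃ μ : E, (∀ t, ⟪v t, μ⟫ ≤ 0) ∧ 0 < ⟪b, μ⟫ := by
  classical
  refine or_iff_not_imp_left.mpr fun hb => ?_
  obtain ⟨μ, hμ, hbμ⟩ := ProperCone.hyperplane_separation' (finiteProperCone v) hb
  refine ⟨-μ, fun t => ?_, by rw [inner_neg_right]; linarith⟩
  have hvt : v t ∈ finiteProperCone v :=
    ⟨Pi.single t 1, fun s => by by_cases h : s = t <;> simp [h], by simp [Pi.single_apply]⟩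
  rw [inner_neg_right]
  linarith [hμ _ hvt]

theorem farkas_le {κ : Type*} [Fintype κ] [DecidableEq κ] (A : ι → κ → ℝ) (b : κ → ℝ) :
    (∃ y : ι → ℝ, (∀ t, 0 ≤ y t) ∧ ∀ k, b k ≤ ∑ t, y t * A t k) ∨
      ∃ μ : κ → ℝ, (∀ k, 0 ≤ μ k) ∧ (∀ t, ∑ k, A t k * μ k ≤ 0) ∧ 0 < ∑ k, b k * μ k := by
  -- the vectors `-e k` are the slack variables of the inequalities
  have hinner (x μ : EuclideanSpace ℝ κ) : ⟪x, μ⟫ = ∑ k, x k * μ k := by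
    simp [PiLp.inner_apply, mul_comm]
  rcases farkas (Sum.elim (fun t => WithLp.toLp 2 (A t)) fun k => -EuclideanSpace.single k 1)
    (WithLp.toLp 2 b) with ⟨y, hy, hb⟩ | ⟨μ, hμ, hbμ⟩
  · refine Or.inl ⟨fun t => y (Sum.inl t), fun t => hy _, fun k => ?_⟩
    have hk : b k = ∑ t, y (Sum.inl t) * A t k - y (Sum.inr k) := by
      simpa [Fintype.sum_sum_type, WithLp.ofLp_sum, Pi.single_apply, sub_eq_add_neg] using
        congrArg (fun x : EuclideanSpace ℝ κ => x k) hb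
    linarith [hy (Sum.inr k)]
  · refine Or.inr ⟨μ, fun k => ?_, fun t => ?_, ?_⟩
    · simpa [hinner] using hμ (Sum.inr k)
    · simpa [hinner] using hμ (Sum.inl t)
    · simpa [hinner] using hbμ

end Farkas

noncomputable section DeviationPlans

variable {N : Type} {C : N → Type}

def ratePlan [∀ i, Fintype (C i)] [∀ i, DecidableEq (C i)] (β : ∀ i, C i → C i → ℝ) (M : ℝ) :
    ∀ i, C i → C i → ℝ :=
  fun i a d => β i a d / M + if d = a then 1 - (∑ d', β i a d') / M else 0

lemma isMixed_ratePlan [∀ i, Fintype (C i)] [∀ i, DecidableEq (C i)] {β : ∀ i, C i → C i → ℝ}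
    {M : ℝ} (hβ : ∀ i a d, 0 ≤ β i a d) (hM : ∀ i a, ∑ d, β i a d < M) (i : N) (a : C i) :
    IsMixed (ratePlan β M i a) := by
  have hM0 : 0 < M := (Finset.sum_nonneg fun d _ => hβ i a d).trans_lt (hM i a)
  refine ⟨fun d => add_nonneg (div_nonneg (hβ i a d) hM0.le) ?_, ?_⟩
  · split_ifs
    · rw [sub_nonneg, div_le_one hM0]
      exact (hM i a).le
    · exact le_rfl
  · simp [ratePlan, Finset.sum_add_distrib, ← Finset.sum_div]

def avgPlan {γ : Type*} [Fintype γ] (F : γ → ∀ i, C i → C i → ℝ) : ∀ i, C i → C i → ℝ :=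
  fun i a d => (Fintype.card γ : ℝ)⁻¹ * ∑ k, F k i a d

lemma avgPlan_comp_equiv {γ : Type*} [Fintype γ] (F : γ → ∀ i, C i → C i → ℝ) (e : γ ≃ γ) :
    avgPlan (F ∘ e) = avgPlan F := by
  funext i a d
  simp only [avgPlan, Function.comp_apply, e.sum_comp (fun k => F k i a d)]

lemma avgPlan_pos {γ : Type*} [Fintype γ] {F : γ → ∀ i, C i → C i → ℝ} {i : N} {a d : C i}
    (hF : ∀ k, 0 ≤ F k i a d) (k : γ) (hk : 0 < F k i a d) : 0 < avgPlan F i a d :=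
  mul_pos (by have := Fintype.card_pos_iff.mpr ⟨k⟩; positivity)
    (Finset.sum_pos' (fun k _ => hF k) ⟨k, Finset.mem_univ k, hk⟩)

end DeviationPlans

section DualVectors

variable {N : Type} [Fintype N] [DecidableEq N] {C : N → Type} [∀ i, Fintype (C i)]
  (U : N → (∀ j, C j) → ℝ)

def rateGain (β : ∀ i, C i → C i → ℝ) (c : ∀ j, C j) : ℝ :=
  ∑ i, ∑ d, β i (c i) d * (U i (Function.update c i d) - U i c)

lemma devGain_eq_rateGain {α : ∀ i, C i → C i → ℝ} (hα : ∀ i a, ∑ d, α i a d = 1)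
    (c : ∀ j, C j) : devGain U α c = rateGain U α c := by
  simp [devGain, rateGain, mul_sub, Finset.sum_sub_distrib, ← Finset.sum_mul, hα]

lemma devGain_avgPlan {γ : Type*} [Fintype γ] [Nonempty γ] (F : γ → ∀ i, C i → C i → ℝ)
    (c : ∀ j, C j) :
    devGain U (avgPlan F) c = (Fintype.card γ : ℝ)⁻¹ * ∑ k, devGain U (F k) c := by
  have hcard : (Fintype.card γ : ℝ)⁻¹ * Fintype.card γ = 1 :=
    inv_mul_cancel₀ (Nat.cast_ne_zero.mpr Fintype.card_ne_zero)
  simp only [devGain, avgPlan, Finset.sum_sub_distrib, Finset.sum_const, Finset.card_univ,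
    nsmul_eq_mul, mul_sub, Finset.mul_sum, Finset.sum_mul, ← mul_assoc, hcard, one_mul]
  congr 1
  conv_rhs => rw [Finset.sum_comm]
  exact Finset.sum_congr rfl fun i _ => Finset.sum_comm

lemma isDualVector_avgPlan {γ : Type*} [Fintype γ] [Nonempty γ] {F : γ → ∀ i, C i → C i → ℝ}
    (hF : ∀ k, IsDualVector U (F k)) : IsDualVector U (avgPlan F) := by
  refine ⟨fun i a => ⟨fun d => ?_, ?_⟩, fun c => ?_⟩
  · exact mul_nonneg (by positivity) (Finset.sum_nonneg fun k _ => ((hF k).1 i a).1 d)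
  · simp only [avgPlan, ← Finset.mul_sum]
    rw [Finset.sum_comm]
    simp [fun k => ((hF k).1 i a).2]
  · rw [devGain_avgPlan]
    exact mul_nonneg (by positivity) (Finset.sum_nonneg fun k _ => (hF k).2 c)

lemma devGain_avgPlan_pos {γ : Type*} [Fintype γ] {F : γ → ∀ i, C i → C i → ℝ}
    (hF : ∀ k, IsDualVector U (F k)) {c : ∀ j, C j} (k : γ) (hk : 0 < devGain U (F k) c) :
    0 < devGain U (avgPlan F) c := by
  have : Nonempty γ := ⟨k⟩
  rw [devGain_avgPlan]
  exact mul_pos (by positivity) (Finset.sum_pos' (fun k _ => (hF k).2 c) ⟨k, Finset.mem_univ k, hk⟩)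

variable [∀ i, DecidableEq (C i)]

lemma isDualVector_ratePlan {β : ∀ i, C i → C i → ℝ} {M : ℝ} (hβ : ∀ i a d, 0 ≤ β i a d)
    (hM0 : 0 < M) (hM : ∀ i a, ∑ d, β i a d < M) (hgain : ∀ c, 0 ≤ rateGain U β c) :
    IsDualVector U (ratePlan β M) ∧ ∀ c, devGain U (ratePlan β M) c = rateGain U β c / M := by
  have hdev : ∀ c, devGain U (ratePlan β M) c = rateGain U β c / M := fun c => by
    rw [devGain_eq_rateGain U fun i a => (isMixed_ratePlan hβ hM i a).2]
    simp [rateGain, ratePlan, add_mul, Finset.sum_add_distrib, Finset.sum_div, div_mul_eq_mul_div]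
  exact ⟨⟨isMixed_ratePlan hβ hM, fun c => (hdev c).symm ▸ div_nonneg (hgain c) hM0.le⟩, hdev⟩

def deviationGain (t : Σ i : N, C i × C i) (c : ∀ j, C j) : ℝ :=
  if c t.1 = t.2.1 then U t.1 (Function.update c t.1 t.2.2) - U t.1 c else 0

lemma incentiveSum_eq_sum_deviationGain (μ : (∀ j, C j) → ℝ) (i : N) (a d : C i) :
    incentiveSum U μ i a d = ∑ c, deviationGain U ⟨i, (a, d)⟩ c * μ c :=
  Finset.sum_congr rfl fun c _ => by unfold deviationGain; split_ifs <;> ring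

lemma sum_mul_deviationGain (y : (Σ i : N, C i × C i) → ℝ) (c : ∀ j, C j) :
    ∑ t, y t * deviationGain U t c = rateGain U (fun i a d => y ⟨i, (a, d)⟩) c := by
  rw [← Finset.univ_sigma_univ, Finset.sum_sigma, rateGain]
  refine Finset.sum_congr rfl fun i _ => ?_
  rw [Fintype.sum_prod_type, Finset.sum_eq_single (c i)]
  · simp [deviationGain]
  · intro a _ ha
    exact Finset.sum_eq_zero fun d _ => by simp [deviationGain, Ne.symm ha]
  · simp

lemma exists_rateGain_pos_of_forall_isCorrelatedEq (c₀ : ∀ j, C j)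
    (hnull : ∀ μ, IsCorrelatedEq U μ → μ c₀ = 0) :
    ∃ β : ∀ i, C i → C i → ℝ, (∀ i a d, 0 ≤ β i a d) ∧ (∀ c, 0 ≤ rateGain U β c) ∧
      0 < rateGain U β c₀ := by
  classical
  rcases farkas_le (deviationGain U) (Pi.single c₀ 1) with ⟨y, hy, hb⟩ | ⟨μ, hμ, hg, hpos⟩
  · refine ⟨fun i a d => y ⟨i, (a, d)⟩, fun i a d => hy _, fun c => ?_, ?_⟩
    · rw [← sum_mul_deviationGain]
      exact le_trans (by by_cases h : c = c₀ <;> simp [h]) (hb c)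
    · rw [← sum_mul_deviationGain]
      exact lt_of_lt_of_le (by simp) (hb c₀)
  · simp only [Pi.single_apply, ite_mul, one_mul, zero_mul, Finset.sum_ite_eq',
      Finset.mem_univ, if_true] at hpos
    have htot : 0 < ∑ c, μ c :=
      hpos.trans_le (Finset.single_le_sum (fun c _ => hμ c) (Finset.mem_univ c₀))
    have hCE : IsCorrelatedEq U fun c => μ c / ∑ c, μ c := by
      refine ⟨fun c => div_nonneg (hμ c) htot.le, by rw [← Finset.sum_div, div_self htot.ne'],
        fun i a d => ?_⟩
      rw [incentiveSum_eq_sum_deviationGain]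
      simp only [mul_div_assoc', ← Finset.sum_div]
      exact div_nonpos_of_nonpos_of_nonneg (hg _) htot.le
    exact absurd (hnull _ hCE) (div_pos hpos htot).ne'

lemma exists_isDualVector_devGain_pos (c₀ : ∀ j, C j)
    (hnull : ∀ μ, IsCorrelatedEq U μ → μ c₀ = 0) :
    ∃ α, IsDualVector U α ∧ 0 < devGain U α c₀ := by
  obtain ⟨β, hβ, hgain, hpos⟩ := exists_rateGain_pos_of_forall_isCorrelatedEq U c₀ hnull
  have hnonneg : ∀ i a, 0 ≤ ∑ d, β i a d := fun i a => Finset.sum_nonneg fun d _ => hβ i a d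
  have hrow : ∀ i a, ∑ d, β i a d ≤ ∑ i, ∑ a, ∑ d, β i a d := fun i a =>
    (Finset.single_le_sum (f := fun a => ∑ d, β i a d) (fun a _ => hnonneg i a)
      (Finset.mem_univ a)).trans
    (Finset.single_le_sum (f := fun i => ∑ a, ∑ d, β i a d)
      (fun i _ => Finset.sum_nonneg fun a _ => hnonneg i a) (Finset.mem_univ i))
  have hM0 : 0 < 1 + ∑ i, ∑ a, ∑ d, β i a d := by
    linarith [Finset.sum_nonneg fun i (_ : i ∈ Finset.univ) =>
      Finset.sum_nonneg fun a (_ : a ∈ Finset.univ) => hnonneg i a]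
  obtain ⟨hdual, hdev⟩ :=
    isDualVector_ratePlan U hβ hM0 (fun i a => by linarith [hrow i a]) hgain
  exact ⟨_, hdual, (hdev c₀).symm ▸ div_pos hpos hM0⟩

lemma exists_isDualVector_isStrong_isFull [∀ i, Nonempty (C i)] :
    ∃ α, IsDualVector U α ∧ IsStrong U α ∧ IsFull U α := by
  classical
  have hstay : IsDualVector U (ratePlan 0 1) :=
    (isDualVector_ratePlan U (fun _ _ _ => le_rfl) one_pos (fun _ _ => by simp)
      (fun c => by simp [rateGain])).1
  have hstrong : ∀ c : ∀ j, C j, ∃ β, IsDualVector U β ∧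
      ((∀ μ, IsCorrelatedEq U μ → μ c = 0) → 0 < devGain U β c) := fun c => by
    by_cases hnull : ∀ μ, IsCorrelatedEq U μ → μ c = 0
    · obtain ⟨β, hβ, hpos⟩ := exists_isDualVector_devGain_pos U c hnull
      exact ⟨β, hβ, fun _ => hpos⟩
    · exact ⟨_, hstay, fun h => absurd h hnull⟩
  have hfull : ∀ t : Σ i : N, C i × C i, ∃ β, IsDualVector U β ∧
      ((∃ γ, IsDualVector U γ ∧ 0 < γ t.1 t.2.1 t.2.2) → 0 < β t.1 t.2.1 t.2.2) := fun t => by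
    by_cases h : ∃ γ, IsDualVector U γ ∧ 0 < γ t.1 t.2.1 t.2.2
    · obtain ⟨γ, hγ, hpos⟩ := h
      exact ⟨γ, hγ, fun _ => hpos⟩
    · exact ⟨_, hstay, fun h' => absurd h' h⟩
  choose S hSdual hSpos using hstrong
  choose F hFdual hFpos using hfull
  have hdual : ∀ k, IsDualVector U (Sum.elim S F k) := Sum.rec hSdual hFdual
  exact ⟨avgPlan (Sum.elim S F), isDualVector_avgPlan U hdual,
    fun c hc => devGain_avgPlan_pos U hdual (Sum.inl c) (hSpos c hc),
    fun i a d h => avgPlan_pos (fun k => ((hdual k).1 i a).1 d) (Sum.inr ⟨i, (a, d)⟩) (hFpos _ h)⟩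

end DualVectors

section Relabel

variable {S S' : Type} (e : S ≃ S') (β : S' → S' → ℝ)

lemma isAbsorbing_map_iff (B : Finset S) :
    IsAbsorbing (fun a b => β (e a) (e b)) B ↔ IsAbsorbing β (B.map e.toEmbedding) := by
  simp only [IsAbsorbing, Finset.map_nonempty, Finset.forall_mem_map]
  exact and_congr_right fun _ => forall₂_congr fun c _ => e.forall_congr fun d => by simp

lemma isMinimalAbsorbing_map_iff (B : Finset S) :
    IsMinimalAbsorbing (fun a b => β (e a) (e b)) B ↔
      IsMinimalAbsorbing β (B.map e.toEmbedding) := by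
  refine and_congr (isAbsorbing_map_iff e β B) (e.finsetCongr.forall_congr fun B' => ?_)
  simp only [Equiv.finsetCongr_apply, Finset.map_subset_map, isAbsorbing_map_iff, Finset.map_inj]

variable [Fintype S] [Fintype S']

lemma isMixed_comp_equiv {σ : S' → ℝ} : IsMixed (σ ∘ e) ↔ IsMixed σ := by
  simp only [IsMixed, Function.comp_apply, e.sum_comp σ]
  exact and_congr_left' (e.forall_congr fun _ => Iff.rfl)

lemma isStationaryStrat_comp_equiv {σ : S' → ℝ} :
    IsStationaryStrat (fun a b => β (e a) (e b)) (σ ∘ e) ↔ IsStationaryStrat β σ := by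
  have : devImage (fun a b => β (e a) (e b)) (σ ∘ e) = devImage β σ ∘ e :=
    funext fun d => e.sum_comp (fun c => σ c * β c (e d))
  rw [IsStationaryStrat, IsStationaryStrat, this]
  exact e.surjective.injective_comp_right.eq_iff

lemma comp_equiv_mem_reducedSet_iff {σ : S' → ℝ} :
    σ ∘ e ∈ ReducedSet (fun a b => β (e a) (e b)) ↔ σ ∈ ReducedSet β := by
  refine and_congr (isMixed_comp_equiv e) (and_congr (isStationaryStrat_comp_equiv e β)
    (e.finsetCongr.exists_congr fun B => and_congr (isMinimalAbsorbing_map_iff e β B) ?_))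
  simp [Equiv.finsetCongr_apply, e.forall_congr_left (p := fun s => σ (e s) ≠ 0 → s ∈ B)]

end Relabel

section Permutations

variable {N : Type} (C : N → Type) (q : Equiv.Perm N) (h : ∀ i, C (q i) = C i)

lemma permProfile_mul (r : Equiv.Perm N) (hr : ∀ i, C (r i) = C i) (c : ∀ j, C j) :
    permProfile C (q * r) (fun i => (h (r i)).trans (hr i)) c =
      permProfile C q h (permProfile C r hr c) :=
  funext fun _ => (cast_cast _ _ _).symm

lemma permProfile_permProfile_inv (c : ∀ j, C j) :
    permProfile C q h (permProfile C q⁻¹ (permTypeEq C q h) c) = c :=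
  funext fun j => eq_of_heq <|
    (cast_heq _ _).trans <| (cast_heq _ _).trans <| congr_arg_heq c (q.apply_symm_apply j)

def permProfileEquiv : (∀ j, C j) ≃ (∀ j, C j) where
  toFun := permProfile C q h
  invFun := permProfile C q⁻¹ (permTypeEq C q h)
  left_inv := permProfile_permProfile_inv C q⁻¹ (permTypeEq C q h)
  right_inv := permProfile_permProfile_inv C q h

def permPlan (α : ∀ i, C i → C i → ℝ) : ∀ j, C j → C j → ℝ :=
  fun j a d => α (q.symm j) (cast (permTypeEq C q h j).symm a) (cast (permTypeEq C q h j).symm d)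

lemma permPlan_permPlan (r : Equiv.Perm N) (hr : ∀ i, C (r i) = C i) (α : ∀ i, C i → C i → ℝ) :
    permPlan C q h (permPlan C r hr α) =
      permPlan C (q * r) (fun i => (h (r i)).trans (hr i)) α := by
  funext j a d
  simp only [permPlan, cast_cast]
  rfl

lemma isMixed_permPlan [∀ i, Fintype (C i)] {α : ∀ i, C i → C i → ℝ}
    (hα : ∀ i a, IsMixed (α i a)) (j : N) (a : C j) : IsMixed (permPlan C q h α j a) :=
  (isMixed_comp_equiv (Equiv.cast (permTypeEq C q h j)).symm).mpr (hα _ _)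

lemma permPlan_avgPlan {γ : Type*} [Fintype γ] (F : γ → ∀ i, C i → C i → ℝ) :
    permPlan C q h (avgPlan F) = avgPlan fun k => permPlan C q h (F k) :=
  rfl

variable {C q h} in
lemma apply_symm_eq_of_permPlan_eq {α : ∀ i, C i → C i → ℝ} (hα : permPlan C q h α = α) (j : N)
    (a b : C (q.symm j)) :
    α (q.symm j) a b = α j (cast (permTypeEq C q h j) a) (cast (permTypeEq C q h j) b) := by
  conv_rhs => rw [← hα]
  simp [permPlan]

variable {C q h} in
lemma mem_reducedSet_symm_iff_of_permPlan_eq [∀ i, Fintype (C i)] {α : ∀ i, C i → C i → ℝ}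
    (hα : permPlan C q h α = α) (j : N) (σ : C (q.symm j) → ℝ) :
    σ ∈ ReducedSet (α (q.symm j)) ↔
      (fun d : C j => σ (cast (permTypeEq C q h j).symm d)) ∈ ReducedSet (α j) := by
  set e := Equiv.cast (permTypeEq C q h j)
  have hrow : α (q.symm j) = fun a b => α j (e a) (e b) :=
    funext fun a => funext fun b => apply_symm_eq_of_permPlan_eq hα j a b
  have hσ : (fun d : C j => σ (cast (permTypeEq C q h j).symm d)) ∘ e = σ :=
    funext fun a => by simp [e]
  rw [hrow, ← comp_equiv_mem_reducedSet_iff e, hσ]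

variable {C q h} in
lemma payoff_permProfile {U : N → (∀ j, C j) → ℝ}
    (hU : ∀ i c, U (q i) (permProfile C q h c) = U i c) (j : N) (c : ∀ j, C j) :
    U j (permProfile C q h c) = U (q.symm j) c := by
  rw [← hU (q.symm j) c, q.apply_symm_apply]

variable [DecidableEq N]

lemma permProfile_update (c : ∀ j, C j) (j : N) (x : C (q.symm j)) :
    permProfile C q h (Function.update c (q.symm j) x) =
      Function.update (permProfile C q h c) j (cast (permTypeEq C q h j) x) := by
  funext k
  by_cases hk : k = j
  · subst hk
    simp [permProfile]
  · simp [permProfile, Function.update_of_ne hk, Function.update_of_ne (q.symm.injective.ne hk)]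

variable [Fintype N] [∀ i, Fintype (C i)] {U : N → (∀ j, C j) → ℝ}

lemma devGain_permPlan_permProfile (hU : ∀ i c, U (q i) (permProfile C q h c) = U i c)
    (α : ∀ i, C i → C i → ℝ) (c : ∀ j, C j) :
    devGain U (permPlan C q h α) (permProfile C q h c) = devGain U α c := by
  rw [devGain, devGain]
  conv_rhs => rw [← Equiv.sum_comp q.symm]
  refine Finset.sum_congr rfl fun j _ => ?_
  conv_lhs => rw [payoff_permProfile hU, ← (Equiv.cast (permTypeEq C q h j)).sum_comp]
  congr 1
  refine Finset.sum_congr rfl fun d _ => ?_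
  rw [Equiv.cast_apply, ← permProfile_update, payoff_permProfile hU]
  simp [permPlan, permProfile]

lemma isDualVector_permPlan (hU : ∀ i c, U (q i) (permProfile C q h c) = U i c)
    {α : ∀ i, C i → C i → ℝ} (hα : IsDualVector U α) :
    IsDualVector U (permPlan C q h α) := by
  refine ⟨isMixed_permPlan C q h hα.1, fun c => ?_⟩
  obtain ⟨c, rfl⟩ := (permProfileEquiv C q h).surjective c
  exact (devGain_permPlan_permProfile C q h hU α c).symm ▸ hα.2 c

lemma mixedPayoff_permMixed (hU : ∀ i c, U (q i) (permProfile C q h c) = U i c)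
    (σ : ∀ j, C j → ℝ) (i : N) :
    mixedPayoff U (permMixed C q h σ) (q i) = mixedPayoff U σ i := by
  rw [mixedPayoff, mixedPayoff, ← (permProfileEquiv C q h).sum_comp]
  refine Finset.sum_congr rfl fun c _ => ?_
  rw [← Equiv.prod_comp q.symm (fun j => σ j (c j))]
  simp [permProfileEquiv, permMixed, permProfile, hU]

end Permutations

section SymmetryGroup

variable {N : Type} {C : N → Type} (U : N → (∀ j, C j) → ℝ)

def IsSymmetry (q : Equiv.Perm N) : Prop :=
  ∃ h : ∀ i, C (q i) = C i, ∀ i c, U (q i) (permProfile C q h c) = U i c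

def symmetryGroup : Subgroup (Equiv.Perm N) where
  carrier := {q | IsSymmetry U q}
  one_mem' := ⟨fun _ => rfl, fun _ _ => rfl⟩
  mul_mem' := by
    rintro q r ⟨hq, hUq⟩ ⟨hr, hUr⟩
    exact ⟨fun i => (hq (r i)).trans (hr i), fun i c => by
      rw [permProfile_mul C q hq r hr]; exact (hUq (r i) _).trans (hUr i c)⟩
  inv_mem' := by
    rintro q ⟨hq, hU⟩
    refine ⟨permTypeEq C q hq, fun i c => ?_⟩
    have := hU (q⁻¹ i) (permProfile C q⁻¹ (permTypeEq C q hq) c)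
    rw [permProfile_permProfile_inv, Equiv.Perm.coe_inv, Equiv.apply_symm_apply] at this
    exact this.symm

variable [Fintype N]

noncomputable instance : Fintype (symmetryGroup U) := Fintype.ofFinite _

noncomputable def symmetrize (α : ∀ i, C i → C i → ℝ) : ∀ i, C i → C i → ℝ :=
  avgPlan fun q : symmetryGroup U => permPlan C q q.2.fst α

variable {U}

lemma permPlan_symmetrize {p : Equiv.Perm N} (hp : p ∈ symmetryGroup U)
    (h : ∀ i, C (p i) = C i) (α : ∀ i, C i → C i → ℝ) :
    permPlan C p h (symmetrize U α) = symmetrize U α := by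
  rw [symmetrize, permPlan_avgPlan]
  conv_rhs => rw [← avgPlan_comp_equiv _ (Equiv.mulLeft ⟨p, hp⟩)]
  congr 1
  funext q
  exact permPlan_permPlan C p h q q.2.fst α

variable [DecidableEq N] [∀ i, Fintype (C i)]

lemma isDualVector_permPlan_of_mem {α : ∀ i, C i → C i → ℝ} (hα : IsDualVector U α)
    (q : symmetryGroup U) : IsDualVector U (permPlan C q q.2.fst α) :=
  isDualVector_permPlan C q q.2.fst q.2.snd hα

lemma isDualVector_symmetrize {α : ∀ i, C i → C i → ℝ} (hα : IsDualVector U α) :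
    IsDualVector U (symmetrize U α) :=
  isDualVector_avgPlan U (isDualVector_permPlan_of_mem hα)

lemma isStrong_symmetrize [∀ i, DecidableEq (C i)] {α : ∀ i, C i → C i → ℝ}
    (hα : IsDualVector U α) (hs : IsStrong U α) : IsStrong U (symmetrize U α) := fun c hc =>
  devGain_avgPlan_pos U (isDualVector_permPlan_of_mem hα) 1 (hs c hc)

lemma isFull_symmetrize {α : ∀ i, C i → C i → ℝ} (hα : IsDualVector U α) (hf : IsFull U α) :
    IsFull U (symmetrize U α) := fun i a d hβ =>
  avgPlan_pos (fun q => ((isDualVector_permPlan_of_mem hα q).1 i a).1 d) 1 (hf i a d hβ)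

end SymmetryGroup

theorem symmetric_game_symmetric_reduction_general
    {N : Type} [Fintype N] [DecidableEq N]
    {C : N → Type} [∀ i, Fintype (C i)] [∀ i, DecidableEq (C i)] [∀ i, Nonempty (C i)]
    (U : ∀ i : N, (∀ j, C j) → ℝ)
    (P : Set (Equiv.Perm N)) (hC : ∀ p ∈ P, ∀ i, C (p i) = C i)
    (hsym : ∀ p (hp : p ∈ P), ∀ (i : N) (c : ∀ j, C j),
      U (p i) (permProfile C p (hC p hp) c) = U i c) :
    ∃ α : ∀ i, C i → C i → ℝ, IsDualVector U α ∧ IsStrong U α ∧ IsFull U α ∧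
      ∀ p (hp : p ∈ P),
        (∀ (j : N) (cj dj : C (p.symm j)),
          α (p.symm j) cj dj =
            α j (cast (permTypeEq C p (hC p hp) j) cj)
              (cast (permTypeEq C p (hC p hp) j) dj)) ∧
        (∀ (j : N) (σ : C (p.symm j) → ℝ),
          σ ∈ ReducedSet (α (p.symm j)) ↔
            (fun d : C j => σ (cast (permTypeEq C p (hC p hp) j).symm d))
              ∈ ReducedSet (α j)) ∧
        (∀ σ : ∀ j, C j → ℝ, (∀ j, σ j ∈ ReducedSet (α j)) →
          ∀ i : N, mixedPayoff U (permMixed C p (hC p hp) σ) (p i) =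
            mixedPayoff U σ i) := by
  obtain ⟨α, hdual, hstrong, hfull⟩ := exists_isDualVector_isStrong_isFull U
  refine ⟨symmetrize U α, isDualVector_symmetrize hdual, isStrong_symmetrize hdual hstrong,
    isFull_symmetrize hdual hfull, fun p hp => ?_⟩
  have hinv := permPlan_symmetrize ⟨hC p hp, hsym p hp⟩ (hC p hp) α
  exact ⟨apply_symm_eq_of_permPlan_eq hinv, mem_reducedSet_symm_iff_of_permPlan_eq hinv,
    fun σ _ => mixedPayoff_permMixed C p (hC p hp) (hsym p hp) σ⟩

/-- If `Γ` is `P`-symmetric, then there is a strong and full dual vector `α` which is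
`P`-symmetric (`α_{p(i)} = α_i`, so that `C_{p(i)}/α_{p(i)} = C_i/α_i`) and whose reduced
game is again `p`-symmetric for every `p ∈ P`. -/
theorem symmetric_game_symmetric_reduction
    {N : Type} [Fintype N] [DecidableEq N] [Nonempty N]
    {C : N → Type} [∀ i, Fintype (C i)] [∀ i, DecidableEq (C i)] [∀ i, Nonempty (C i)]
    (U : ∀ i : N, (∀ j, C j) → ℝ)
    (P : Set (Equiv.Perm N)) (hC : ∀ p ∈ P, ∀ i, C (p i) = C i)
    (hsym : ∀ p (hp : p ∈ P), ∀ (i : N) (c : ∀ j, C j),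
      U (p i) (permProfile C p (hC p hp) c) = U i c) :
    ∃ α : ∀ i, C i → C i → ℝ, IsDualVector U α ∧ IsStrong U α ∧ IsFull U α ∧
      ∀ p (hp : p ∈ P),
        (∀ (j : N) (cj dj : C (p.symm j)),
          α (p.symm j) cj dj =
            α j (cast (permTypeEq C p (hC p hp) j) cj)
              (cast (permTypeEq C p (hC p hp) j) dj)) ∧
        (∀ (j : N) (σ : C (p.symm j) → ℝ),
          σ ∈ ReducedSet (α (p.symm j)) ↔
            (fun d : C j => σ (cast (permTypeEq C p (hC p hp) j).symm d))
              ∈ ReducedSet (α j)) ∧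
        (∀ σ : ∀ j, C j → ℝ, (∀ j, σ j ∈ ReducedSet (α j)) →
          ∀ i : N, mixedPayoff U (permMixed C p (hC p hp) σ) (p i) =
            mixedPayoff U σ i) :=
  symmetric_game_symmetric_reduction_general U P hC hsym
end
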